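/- arXiv:1008.0301 — 4 statements merged into one kernel-verified Lean document; each statement's English description precedes it below -/
import Mathlib

section
/- With notation as above, if $\lim_{n\to\infty} \frac{1}{n}\log \prod_{\nu=1}^{n} a_{i_\nu j_\nu} = -\lambda$ and $\lim_{n\to\infty}\frac{1}{n}\log\prod_{\nu=1}^{n} b_{i_\nu} = -\lambda^v$ with $0<\lambda^v\le\lambda$, then $\lim_{n\to\infty} L_n(\omega)/n = \lambda^v/\lambda$. -/
/-!
Write `α l = log ∏_{ν<l} a_ν` and `β n = log ∏_{ν<n} b_ν`. By minimality of `L n`, the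
product of the `a`'s overshoots `∏_{ν<n} b_ν` by at most one factor, so
`α (L n) ≤ β n ≤ α (L n) - log amin`; hence `α (L n) / n → -λᵛ`. Since `β n → -∞` forces
`L n → ∞`, also `α (L n) / L n → -λ`, and dividing the two limits gives `L n / n → λᵛ / λ`.
-/

open Finset Filter Topology

theorem tendsto_atTop_of_comp_le_of_tendsto_atBot {ι : Type*} {l : Filter ι} (f : ℕ → ℝ)
    {L : ι → ℕ} {u : ι → ℝ} (hu : Tendsto u l atBot) (h : ∀ᶠ i in l, f (L i) ≤ u i) :
    Tendsto L l atTop := by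
  rw [tendsto_atTop]
  intro m
  obtain ⟨c, hc⟩ := ((Set.finite_Iio m).image f).bddBelow
  filter_upwards [h, hu.eventually_lt_atBot c] with i hfu huc
  by_contra! hlt
  linarith [hc ⟨L i, hlt, rfl⟩]

theorem tendsto_atBot_of_tendsto_div_natCast {β : ℕ → ℝ} {c : ℝ} (hc : c < 0)
    (h : Tendsto (fun n => β n / n) atTop (𝓝 c)) : Tendsto β atTop atBot := by
  refine (tendsto_natCast_atTop_atTop.atTop_mul_neg hc h).congr' ?_
  filter_upwards [eventually_ne_atTop 0] with n hn
  field_simp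

theorem tendsto_div_natCast_of_le_of_le_add {u v : ℕ → ℝ} {C l : ℝ}
    (hv : Tendsto (fun n => v n / n) atTop (𝓝 l)) (hle : ∀ᶠ n in atTop, u n ≤ v n)
    (hle' : ∀ᶠ n in atTop, v n ≤ u n + C) : Tendsto (fun n => u n / n) atTop (𝓝 l) := by
  have hlower : Tendsto (fun n : ℕ => v n / n - C / n) atTop (𝓝 l) := by
    simpa using hv.sub (tendsto_const_nhds.div_atTop tendsto_natCast_atTop_atTop)
  refine tendsto_of_tendsto_of_tendsto_of_le_of_le' hlower hv ?_ ?_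
  · filter_upwards [hle'] with n hn
    rw [← sub_div]
    gcongr
    linarith
  · filter_upwards [hle] with n hn
    gcongr

theorem tendsto_natCast_div_of_tendsto_div {α : ℕ → ℝ} {L : ℕ → ℕ} {c d : ℝ} (hd : d ≠ 0)
    (hα : Tendsto (fun l => α l / l) atTop (𝓝 d)) (hL : Tendsto L atTop atTop)
    (h : Tendsto (fun n => α (L n) / n) atTop (𝓝 c)) :
    Tendsto (fun n => (L n : ℝ) / n) atTop (𝓝 (c / d)) := by
  have hαL : Tendsto (fun n => α (L n) / L n) atTop (𝓝 d) := hα.comp hL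
  refine (h.div hαL hd).congr' ?_
  filter_upwards [hαL.eventually_ne hd] with n hn
  exact div_div_div_cancel_left' _ _ (div_ne_zero_iff.1 hn).1

/-- One step before the first passage the product is still above `q`, and the last factor is at
least `c`. -/
theorem log_add_log_le_log_prod_of_isLeast {x : ℕ → ℝ} {c q : ℝ} {k : ℕ} (hc : 0 < c)
    (hx : ∀ ν, c ≤ x ν) (hk : IsLeast {l | 1 ≤ l ∧ ∏ ν ∈ range l, x ν ≤ q} k) (h2 : 2 ≤ k) :
    Real.log q + Real.log c ≤ Real.log (∏ ν ∈ range k, x ν) := by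
  have hpos : ∀ l, 0 < ∏ ν ∈ range l, x ν := fun l => prod_pos fun ν _ => hc.trans_le (hx ν)
  obtain ⟨j, rfl⟩ : ∃ j, k = j + 1 := ⟨k - 1, by omega⟩
  have hlt : q < ∏ ν ∈ range j, x ν := not_le.1 fun hle => by
    have := hk.2 ⟨by omega, hle⟩
    omega
  have hq : 0 < q := (hpos _).trans_le hk.1.2
  rw [← Real.log_mul hq.ne' hc.ne', prod_range_succ]
  exact Real.log_le_log (by positivity) (mul_le_mul hlt.le (hx j) hc.le (hpos j).le)

theorem stmt_1_general {D : Type*}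
    (a b : D → ℝ) (amin : ℝ)
    (hamin : 0 < amin) (ha : ∀ d, amin ≤ a d)
    (ω : ℕ → D) (L : ℕ → ℕ)
    (hL : ∀ n, IsLeast {l : ℕ | 1 ≤ l ∧
      ∏ ν ∈ Finset.range l, a (ω ν) ≤ ∏ ν ∈ Finset.range n, b (ω ν)} (L n))
    (lam lamv : ℝ) (hlamv : 0 < lamv) (hlams : lamv ≤ lam)
    (hlim : Tendsto (fun n => Real.log (∏ ν ∈ Finset.range n, a (ω ν)) / n)
      atTop (𝓝 (-lam)))
    (hlimv : Tendsto (fun n => Real.log (∏ ν ∈ Finset.range n, b (ω ν)) / n)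
      atTop (𝓝 (-lamv))) :
    Tendsto (fun n => (L n : ℝ) / n) atTop (𝓝 (lamv / lam)) := by
  set α : ℕ → ℝ := fun l => Real.log (∏ ν ∈ range l, a (ω ν))
  set β : ℕ → ℝ := fun n => Real.log (∏ ν ∈ range n, b (ω ν))
  have hlow : ∀ n, α (L n) ≤ β n := fun n =>
    Real.log_le_log (prod_pos fun ν _ => hamin.trans_le (ha _)) (hL n).1.2
  have hLtop : Tendsto L atTop atTop :=
    tendsto_atTop_of_comp_le_of_tendsto_atBot α
      (tendsto_atBot_of_tendsto_div_natCast (neg_lt_zero.2 hlamv) hlimv) (.of_forall hlow)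
  have hup : ∀ᶠ n in atTop, β n ≤ α (L n) + -Real.log amin :=
    (hLtop.eventually_ge_atTop 2).mono fun n hn => by
      linarith [log_add_log_le_log_prod_of_isLeast hamin (fun ν => ha (ω ν)) (hL n) hn]
  have hαL : Tendsto (fun n => α (L n) / n) atTop (𝓝 (-lamv)) :=
    tendsto_div_natCast_of_le_of_le_add hlimv (.of_forall hlow) hup
  have := tendsto_natCast_div_of_tendsto_div
    (neg_ne_zero.2 (hlamv.trans_le hlams).ne') hlim hLtop hαL
  rwa [neg_div_neg_eq] at this

/-- If `(1/n) log ∏_{ν<n} a (ω ν) → -λ` and `(1/n) log ∏_{ν<n} b (ω ν) → -λᵛ`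
with `0 < λᵛ ≤ λ`, then `L n / n → λᵛ / λ`, where `L n` is the least `l ≥ 1` with
`∏_{ν<l} a (ω ν) ≤ ∏_{ν<n} b (ω ν)`. -/
theorem stmt_1 {D : Type*} [Fintype D]
    (a b : D → ℝ) (amin : ℝ)
    (hamin : 0 < amin) (ha : ∀ d, amin ≤ a d)
    (hab : ∀ d, a d ≤ b d) (hb : ∀ d, b d < 1)
    (ω : ℕ → D) (L : ℕ → ℕ)
    (hL : ∀ n, IsLeast {l : ℕ | 1 ≤ l ∧
      ∏ ν ∈ Finset.range l, a (ω ν) ≤ ∏ ν ∈ Finset.range n, b (ω ν)} (L n))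
    (lam lamv : ℝ) (hlamv : 0 < lamv) (hlams : lamv ≤ lam)
    (hlim : Tendsto (fun n => Real.log (∏ ν ∈ Finset.range n, a (ω ν)) / n)
      atTop (𝓝 (-lam)))
    (hlimv : Tendsto (fun n => Real.log (∏ ν ∈ Finset.range n, b (ω ν)) / n)
      atTop (𝓝 (-lamv))) :
    Tendsto (fun n => (L n : ℝ) / n) atTop (𝓝 (lamv / lam)) :=
  stmt_1_general a b amin hamin ha ω L hL lam lamv hlamv hlams hlim hlimv
end

section
/- Let $\nu$ be a finite Borel measure on a metric space $X$ and $J\subseteq X$. If for every $x\in J$ we have $\liminf_{r\to 0} \frac{\log \nu(B(x,r))}{\log r} \le d$, then the Hausdorff dimension of $J$ is at most $d$. -/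
open Filter Topology MeasureTheory Metric
open scoped ENNReal

/-! For every `s > d` the hypothesis gives, at each point of `J`, arbitrarily small radii with
`ν (B(x, r)) ≥ r ^ s`. At any scale, the Vitali lemma extracts from these balls a disjoint family
whose fourfold enlargements cover `J`; disjointness bounds the `s`-power sum of their diameters by
`8 ^ s ν(X) < ∞`, so `μH[s] J < ∞` and hence `dimH J ≤ s`. -/

theorem ENNReal.ofReal_rpow_lt_of_log_div_log_lt {r s : ℝ} {m : ℝ≥0∞} (hr0 : 0 < r)
    (hr1 : r < 1) (h : ENNReal.log m / (Real.log r : EReal) < s) :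
    ENNReal.ofReal (r ^ s) < m := by
  have hlog : Real.log r < 0 := Real.log_neg hr0 hr1
  have hs : (s : EReal) = ((s * Real.log r : ℝ) : EReal) / (Real.log r : EReal) := by
    rw [← EReal.coe_div, mul_div_cancel_right₀ _ hlog.ne]
  rw [hs, (EReal.strictAnti_div_right_of_neg (EReal.coe_lt_coe_iff.2 hlog)
    (EReal.coe_ne_bot _)).lt_iff_gt] at h
  rwa [← ENNReal.log_lt_log_iff, ENNReal.log_ofReal_of_pos (Real.rpow_pos_of_pos hr0 s),
    Real.log_rpow hr0]

theorem frequently_ofReal_rpow_lt_of_liminf_log_div_log_lt {f : ℝ → ℝ≥0∞} {s : ℝ}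
    (h : liminf (fun r : ℝ => ENNReal.log (f r) / (Real.log r : EReal)) (𝓝[>] 0) < s) :
    ∃ᶠ r in 𝓝[>] 0, ENNReal.ofReal (r ^ s) < f r := by
  have hsmall : ∀ᶠ r in 𝓝[>] (0 : ℝ), r ∈ Set.Ioo 0 1 := Ioo_mem_nhdsGT one_pos
  refine ((frequently_lt_of_liminf_lt (by isBoundedDefault) h).and_eventually hsmall).mono ?_
  rintro r ⟨hr, hr0, hr1⟩
  exact ENNReal.ofReal_rpow_lt_of_log_div_log_lt hr0 hr1 hr

theorem ediam_closedBall_le_ofReal {X : Type*} [PseudoMetricSpace X] (x : X) {r : ℝ}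
    (hr : 0 ≤ r) : ediam (closedBall x r) ≤ ENNReal.ofReal (2 * r) := by
  rw [ENNReal.ofReal_mul zero_le_two, ENNReal.ofReal_ofNat, ← closedEBall_ofReal hr]
  exact ediam_closedEBall_le

section MassDistribution

variable {X : Type*} [MetricSpace X] [MeasurableSpace X] [BorelSpace X]

theorem exists_countable_closedBall_cover_of_frequently_le (ν : Measure X) [SFinite ν]
    {J : Set X} {s δ : ℝ} (hδ : 0 < δ)
    (h : ∀ x ∈ J, ∃ᶠ r in 𝓝[>] 0, ENNReal.ofReal (r ^ s) ≤ ν (closedBall x r)) :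
    ∃ (u : Set X) (r : X → ℝ), u.Countable ∧ (∀ a ∈ u, 0 < r a ∧ r a ≤ δ) ∧
      J ⊆ ⋃ a : u, closedBall a (4 * r a) ∧ ∑' a : u, ENNReal.ofReal (r a ^ s) ≤ ν Set.univ := by
  have hrad : ∀ x, ∃ r, 0 < r ∧ r ≤ δ ∧
      (x ∈ J → ENNReal.ofReal (r ^ s) ≤ ν (closedBall x r)) := by
    intro x
    by_cases hx : x ∈ J
    · obtain ⟨r, hr, hr0, hrδ⟩ := ((h x hx).and_eventually (Ioo_mem_nhdsGT hδ)).exists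
      exact ⟨r, hr0, hrδ.le, fun _ => hr⟩
    · exact ⟨δ, hδ, le_rfl, fun hx' => (hx hx').elim⟩
  choose r hr_pos hr_le hr_mass using hrad
  obtain ⟨u, huJ, hdisj, hcover⟩ := Vitali.exists_disjoint_subfamily_covering_enlargement_closedBall
    J id r δ (fun a _ => hr_le a) 4 (by norm_num)
  have hdisj' : Pairwise (Function.onFun Disjoint fun a : u => closedBall (a : X) (r a)) :=
    fun a b hab => hdisj a.2 b.2 (Subtype.coe_ne_coe.2 hab)
  have hmass : ∀ a : u, ENNReal.ofReal (r a ^ s) ≤ ν (closedBall (a : X) (r a)) :=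
    fun a => hr_mass a (huJ a.2)
  have hcount : u.Countable := by
    have := Measure.countable_meas_pos_of_disjoint_iUnion (μ := ν)
      (fun _ => measurableSet_closedBall) hdisj'
    refine Set.countable_coe_iff.1 (Set.countable_univ_iff.1 (this.mono fun a _ => ?_))
    exact (ENNReal.ofReal_pos.2 (Real.rpow_pos_of_pos (hr_pos a) s)).trans_le (hmass a)
  refine ⟨u, r, hcount, fun a _ => ⟨hr_pos a, hr_le a⟩, fun a ha => ?_, ?_⟩
  · obtain ⟨b, hb, hab⟩ := hcover a ha
    exact Set.mem_iUnion_of_mem ⟨b, hb⟩ (hab (mem_closedBall_self (hr_pos a).le))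
  · calc ∑' a : u, ENNReal.ofReal (r a ^ s)
        ≤ ∑' a : u, ν (closedBall (a : X) (r a)) := ENNReal.tsum_le_tsum hmass
      _ ≤ ν (⋃ a : u, closedBall (a : X) (r a)) :=
        tsum_meas_le_meas_iUnion_of_disjoint ν (fun _ => measurableSet_closedBall) hdisj'
      _ ≤ ν Set.univ := measure_mono (Set.subset_univ _)

theorem hausdorffMeasure_le_of_frequently_le_measure_closedBall (ν : Measure X) [SFinite ν]
    {J : Set X} {s : ℝ} (hs : 0 ≤ s)
    (h : ∀ x ∈ J, ∃ᶠ r in 𝓝[>] 0, ENNReal.ofReal (r ^ s) ≤ ν (closedBall x r)) :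
    μH[s] J ≤ ENNReal.ofReal (8 ^ s) * ν Set.univ := by
  choose u r hu_count hr hcover hsum using fun n : ℕ =>
    exists_countable_closedBall_cover_of_frequently_le ν (δ := 1 / (n + 1)) (by positivity) h
  have : ∀ n, Countable (u n) := fun n => (hu_count n).to_subtype
  have hdiam : ∀ n (a : u n),
      ediam (closedBall (a : X) (4 * r n a)) ≤ ENNReal.ofReal (8 * r n a) := fun n a => by
    refine (ediam_closedBall_le_ofReal (a : X) ?_).trans_eq ?_
    · linarith [(hr n a a.2).1]
    · rw [← mul_assoc]; norm_num
  have hdiam_rpow : ∀ n (a : u n), ediam (closedBall (a : X) (4 * r n a)) ^ s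
      ≤ ENNReal.ofReal (8 ^ s) * ENNReal.ofReal (r n a ^ s) := fun n a => by
    rw [← ENNReal.ofReal_mul (by positivity), ← Real.mul_rpow (by norm_num) (hr n a a.2).1.le,
      ← ENNReal.ofReal_rpow_of_nonneg (by linarith [(hr n a a.2).1]) hs]
    exact ENNReal.rpow_le_rpow (hdiam n a) hs
  have hscale : Tendsto (fun n : ℕ => ENNReal.ofReal (8 * (1 / (n + 1)))) atTop (𝓝 0) := by
    rw [← ENNReal.ofReal_zero, ← mul_zero (8 : ℝ)]
    exact ENNReal.tendsto_ofReal (tendsto_one_div_add_atTop_nhds_zero_nat.const_mul 8)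
  calc μH[s] J ≤ liminf (fun n => ∑' a : u n, ediam (closedBall (a : X) (4 * r n a)) ^ s) atTop :=
        Measure.hausdorffMeasure_le_liminf_tsum s J _ hscale _
          (Eventually.of_forall fun n a => (hdiam n a).trans (ENNReal.ofReal_le_ofReal
            (by linarith [(hr n a a.2).2])))
          (Eventually.of_forall hcover)
    _ ≤ ENNReal.ofReal (8 ^ s) * ν Set.univ := by
      refine liminf_le_of_frequently_le (Frequently.of_forall fun n => ?_)
      calc ∑' a : u n, ediam (closedBall (a : X) (4 * r n a)) ^ s
          ≤ ∑' a : u n, ENNReal.ofReal (8 ^ s) * ENNReal.ofReal (r n a ^ s) :=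
            ENNReal.tsum_le_tsum (hdiam_rpow n)
        _ ≤ ENNReal.ofReal (8 ^ s) * ν Set.univ := by
          rw [ENNReal.tsum_mul_left]
          exact mul_le_mul_right (hsum n) _

end MassDistribution

/-- If `ν` is a finite Borel measure and the lower pointwise dimension
`liminf_{r→0} log ν(B(x,r)) / log r` of `ν` at every point of `J` is at most `d`, then
the Hausdorff dimension of `J` is at most `d`.
The quotient is computed in `EReal`, with `log 0 = ⊥`. -/
theorem stmt_3 {X : Type*} [MetricSpace X] [MeasurableSpace X] [BorelSpace X]
    (ν : Measure X) [IsFiniteMeasure ν] (J : Set X) (d : ℝ)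
    (h : ∀ x ∈ J,
      liminf (fun r : ℝ =>
        ENNReal.log (ν (Metric.closedBall x r)) / (Real.log r : EReal)) (𝓝[>] 0)
        ≤ (d : EReal)) :
    dimH J ≤ ENNReal.ofReal d := by
  by_contra! hJ
  obtain ⟨c, hdc, hcJ⟩ := ENNReal.lt_iff_exists_nnreal_btwn.1 hJ
  rw [← ENNReal.ofReal_coe_nnreal, ENNReal.ofReal_lt_ofReal_iff'] at hdc
  have hmass : ∀ x ∈ J, ∃ᶠ r in 𝓝[>] 0, ENNReal.ofReal (r ^ (c : ℝ)) ≤ ν (closedBall x r) :=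
    fun x hx => (frequently_ofReal_rpow_lt_of_liminf_log_div_log_lt
      ((h x hx).trans_lt (EReal.coe_lt_coe_iff.2 hdc.1))).mono fun _ => le_of_lt
  have hfin : μH[c] J ≠ ⊤ :=
    ne_top_of_le_ne_top (ENNReal.mul_ne_top ENNReal.ofReal_ne_top (measure_ne_top ν _))
      (hausdorffMeasure_le_of_frequently_le_measure_closedBall ν c.coe_nonneg hmass)
  exact (dimH_le_of_hausdorffMeasure_ne_top hfin).not_gt hcJ
end

section
/- With notation as in the previous statement, suppose additionally $D:\mathcal{M}_\sigma(\Sigma)\to\mathbb{R}$ is affine (i.e. $D(\rho\mu+(1-\rho)\nu)=\rho D(\mu)+(1-\rho)D(\nu)$) or more generally continuous along line segments $\rho\mapsto\rho\mu+(1-\rho)\nu$. Then $f(\alpha)=\sup\{D(\mu):\int\varphi\,d\mu=\alpha\}$ is lower semi-continuous, hence continuous, on $[\alpha_{\min},\alpha_{\max}]$. -/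
/-!
Mixing two invariant measures mixes both `∫ φ` and `D` affinely, so `f` is concave on the set
`{∫ φ dμ : μ ∈ M}`, which is the interval `[αmin, αmax]` because `M` is convex and weak-* compact.
A concave function on a closed interval lies above its chords, hence is lower semicontinuous.
Upper semicontinuity holds because the superlevel sets `{μ ∈ M | c ≤ D μ}` are compact, so their
images under `μ ↦ ∫ φ dμ` are closed.
-/

open Filter Topology MeasureTheory
open scoped ENNReal NNReal

namespace ConcaveOn

lemma lowerSemicontinuousWithinAt_uIcc {f : ℝ → ℝ} {x b : ℝ}
    (hf : ConcaveOn ℝ (Set.uIcc x b) f) : LowerSemicontinuousWithinAt f (Set.uIcc x b) x := by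
  rcases eq_or_ne x b with rfl | hxb
  · intro y hy
    rw [Set.uIcc_self]
    exact eventually_nhdsWithin_of_forall fun z hz => (Set.mem_singleton_iff.1 hz).symm ▸ hy
  -- `f` lies above its chord from `x` to `b`, which is continuous and equals `f x` at `x`.
  set chord : ℝ → ℝ := fun z => f x + (z - x) / (b - x) * (f b - f x)
  have hchord_le : ∀ z ∈ Set.uIcc x b, chord z ≤ f z := by
    rw [← segment_eq_uIcc]
    rintro _ ⟨p, q, hp, hq, hpq, rfl⟩
    obtain rfl : p = 1 - q := by linarith
    have hchord : chord ((1 - q) • x + q • b) = (1 - q) • f x + q • f b := by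
      simp only [chord, smul_eq_mul]
      field_simp [sub_ne_zero.2 hxb.symm]
      ring
    exact hchord ▸ hf.2 Set.left_mem_uIcc Set.right_mem_uIcc hp hq hpq
  have hchord : Tendsto chord (𝓝 x) (𝓝 (f x)) := by
    have : Continuous chord := by fun_prop
    simpa [chord] using this.tendsto x
  intro y hy
  filter_upwards [nhdsWithin_le_nhds (hchord.eventually (lt_mem_nhds hy)),
    self_mem_nhdsWithin] with z hz hzI
  exact hz.trans_le (hchord_le z hzI)

lemma lowerSemicontinuousOn_Icc {f : ℝ → ℝ} {a b : ℝ} (hf : ConcaveOn ℝ (Set.Icc a b) f) :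
    LowerSemicontinuousOn f (Set.Icc a b) := by
  intro x hx y hy
  have hleft : ConcaveOn ℝ (Set.uIcc x a) f :=
    hf.subset (Set.uIcc_subset_Icc hx (Set.left_mem_Icc.2 (hx.1.trans hx.2))) (convex_uIcc _ _)
  have hright : ConcaveOn ℝ (Set.uIcc x b) f :=
    hf.subset (Set.uIcc_subset_Icc hx (Set.right_mem_Icc.2 (hx.1.trans hx.2))) (convex_uIcc _ _)
  have hsplit : Set.Icc a b = Set.uIcc x a ∪ Set.uIcc x b := by
    rw [Set.uIcc_of_ge hx.1, Set.uIcc_of_le hx.2, Set.Icc_union_Icc_eq_Icc hx.1 hx.2]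
  rw [hsplit, nhdsWithin_union, eventually_sup]
  exact ⟨hleft.lowerSemicontinuousWithinAt_uIcc y hy, hright.lowerSemicontinuousWithinAt_uIcc y hy⟩

end ConcaveOn

section FiberSup

variable {X : Type*} (M : Set X) (I D : X → ℝ)

-- Off `I '' M` the fibre is empty and this is the junk value `sSup ∅ = 0`.
noncomputable def fiberSup (α : ℝ) : ℝ := sSup (D '' {μ | μ ∈ M ∧ I μ = α})

variable {M I D}

lemma le_fiberSup (hbdd : BddAbove (D '' M)) {μ : X} (hμ : μ ∈ M) :
    D μ ≤ fiberSup M I D (I μ) :=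
  le_csSup (hbdd.mono (Set.image_mono fun _ h => h.1)) ⟨μ, ⟨hμ, rfl⟩, rfl⟩

lemma fiberSup_le {α c : ℝ} (hα : α ∈ I '' M) (h : ∀ μ ∈ M, I μ = α → D μ ≤ c) :
    fiberSup M I D α ≤ c := by
  obtain ⟨μ, hμ, rfl⟩ := hα
  refine csSup_le ⟨D μ, μ, ⟨hμ, rfl⟩, rfl⟩ ?_
  rintro _ ⟨ν, ⟨hν, hIν⟩, rfl⟩
  exact h ν hν hIν

lemma upperSemicontinuousOn_fiberSup [TopologicalSpace X] (hM : IsCompact M)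
    (hI : ContinuousOn I M) (hD : UpperSemicontinuousOn D M) :
    UpperSemicontinuousOn (fiberSup M I D) (I '' M) := by
  rintro _ ⟨μ, hμ, rfl⟩ y hy
  obtain ⟨c, hfc, hcy⟩ := exists_between hy
  have hclosed : IsClosed (I '' (M ∩ D ⁻¹' Set.Ici c)) :=
    ((hD.isCompact_inter_preimage_Ici hM c).image_of_continuousOn
      (hI.mono Set.inter_subset_left)).isClosed
  have hnot : I μ ∉ I '' (M ∩ D ⁻¹' Set.Ici c) := by
    rintro ⟨ν, ⟨hν, hcν⟩, hIν⟩
    have hDν := le_fiberSup (I := I) (hD.bddAbove_of_isCompact hM) hν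
    rw [hIν] at hDν
    exact (hfc.trans_le hcν).not_ge hDν
  filter_upwards [nhdsWithin_le_nhds (hclosed.isOpen_compl.mem_nhds hnot),
    self_mem_nhdsWithin] with α hα hαM
  refine (fiberSup_le hαM fun ν hν hIν => ?_).trans_lt hcy
  by_contra! hcν
  exact hα ⟨ν, ⟨hν, hcν.le⟩, hIν⟩

lemma concaveOn_fiberSup (hbdd : BddAbove (D '' M))
    (hmix : ∀ μ ∈ M, ∀ ν ∈ M, ∀ a b : ℝ, 0 ≤ a → 0 ≤ b → a + b = 1 →
      ∃ κ ∈ M, I κ = a * I μ + b * I ν ∧ a * D μ + b * D ν ≤ D κ) :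
    ConcaveOn ℝ (I '' M) (fiberSup M I D) := by
  refine ⟨?_, ?_⟩
  · rintro _ ⟨μ, hμ, rfl⟩ _ ⟨ν, hν, rfl⟩ a b ha hb hab
    obtain ⟨κ, hκ, hIκ, -⟩ := hmix μ hμ ν hν a b ha hb hab
    exact ⟨κ, hκ, hIκ⟩
  rintro _ ⟨μ, hμ, rfl⟩ _ ⟨ν, hν, rfl⟩ a b ha hb hab
  have hfib : ∀ α, BddAbove (D '' {μ | μ ∈ M ∧ I μ = α}) :=
    fun α => hbdd.mono (Set.image_mono fun _ h => h.1)
  have hne : ∀ μ ∈ M, (D '' {ν | ν ∈ M ∧ I ν = I μ}).Nonempty :=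
    fun μ hμ => ⟨D μ, μ, ⟨hμ, rfl⟩, rfl⟩
  simp only [fiberSup, smul_eq_mul]
  rw [← smul_eq_mul, ← smul_eq_mul (a := b), ← Real.sSup_smul_of_nonneg ha,
    ← Real.sSup_smul_of_nonneg hb, ← csSup_add ((hne μ hμ).smul_set) ((hfib _).smul_of_nonneg ha)
      ((hne ν hν).smul_set) ((hfib _).smul_of_nonneg hb)]
  refine csSup_le (((hne μ hμ).smul_set).add ((hne ν hν).smul_set)) ?_
  rintro _ ⟨_, ⟨_, ⟨μ', ⟨hμ', hIμ'⟩, rfl⟩, rfl⟩, _, ⟨_, ⟨ν', ⟨hν', hIν'⟩, rfl⟩, rfl⟩, rfl⟩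
  obtain ⟨κ', hκ', hIκ', hDκ'⟩ := hmix μ' hμ' ν' hν' a b ha hb hab
  have hκ'_fiber : I κ' = a * I μ + b * I ν := by rw [hIκ', hIμ', hIν']
  rw [← hκ'_fiber]
  exact hDκ'.trans (le_fiberSup hbdd hκ')

end FiberSup

namespace MeasureTheory.ProbabilityMeasure

variable {Ω : Type*} [MeasurableSpace Ω]

noncomputable def convexComb (μ ν : ProbabilityMeasure Ω) (ρ : ℝ≥0) (hρ : ρ ≤ 1) :
    ProbabilityMeasure Ω :=
  ⟨(ρ : ℝ≥0∞) • (μ : Measure Ω) + (1 - (ρ : ℝ≥0∞)) • (ν : Measure Ω), ⟨by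
    simp [add_tsub_cancel_of_le (ENNReal.coe_le_one_iff.2 hρ)]⟩⟩

variable (μ ν : ProbabilityMeasure Ω) {ρ : ℝ≥0} (hρ : ρ ≤ 1)

lemma toMeasure_convexComb :
    (convexComb μ ν ρ hρ : Measure Ω)
      = (ρ : ℝ≥0∞) • (μ : Measure Ω) + (1 - (ρ : ℝ≥0∞)) • (ν : Measure Ω) :=
  rfl

lemma map_convexComb {T : Ω → Ω} (hT : Measurable T) :
    (convexComb μ ν ρ hρ : Measure Ω).map T
      = (ρ : ℝ≥0∞) • (μ : Measure Ω).map T + (1 - (ρ : ℝ≥0∞)) • (ν : Measure Ω).map T := by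
  rw [toMeasure_convexComb, Measure.map_add _ _ hT, Measure.map_smul, Measure.map_smul]

lemma integral_convexComb {g : Ω → ℝ} (hμ : Integrable g μ) (hν : Integrable g ν) :
    ∫ ω, g ω ∂(convexComb μ ν ρ hρ : Measure Ω)
      = ρ * ∫ ω, g ω ∂(μ : Measure Ω) + (1 - ρ) * ∫ ω, g ω ∂(ν : Measure Ω) := by
  have h1ρ : (1 : ℝ≥0∞) - ρ = ((1 - ρ : ℝ≥0) : ℝ≥0∞) := by simp
  rw [toMeasure_convexComb, h1ρ, integral_add_measure (hμ.smul_measure ENNReal.coe_ne_top)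
    (hν.smul_measure ENNReal.coe_ne_top), integral_smul_measure, integral_smul_measure]
  simp only [ENNReal.coe_toReal, smul_eq_mul, NNReal.coe_sub hρ, NNReal.coe_one]

lemma isClosed_setOf_map_eq_self [TopologicalSpace Ω] [HasOuterApproxClosed Ω] [BorelSpace Ω]
    {T : Ω → Ω} (hT : Continuous T) :
    IsClosed {μ : ProbabilityMeasure Ω | (μ : Measure Ω).map T = μ} := by
  have : {μ : ProbabilityMeasure Ω | (μ : Measure Ω).map T = μ}
      = {μ | μ.map hT.measurable.aemeasurable = μ} := by
    ext μ
    simp only [Set.mem_ofPred_eq, ← toMeasure_injective.eq_iff, toMeasure_map]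
  rw [this]
  exact isClosed_eq (continuous_map hT) continuous_id

end MeasureTheory.ProbabilityMeasure

/-- Continuity of the conditional variational formula (Lemma 5.1 of the paper): with
`M` the set of shift-invariant Borel probability measures on the full shift, `φ`
continuous, `Dly` upper semicontinuous on `M` and affine along convex combinations
(`Dly (ρ•μ + (1-ρ)•ν) = ρ Dly μ + (1-ρ) Dly ν`), the function
`f α = sup {Dly μ : μ ∈ M, ∫ φ dμ = α}` is lower semicontinuous, hence continuous,
on `[αmin, αmax]`. -/
theorem stmt_13 {D : Type*} [Fintype D] [Nonempty D] [TopologicalSpace D]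
    [DiscreteTopology D] [MeasurableSpace D] [BorelSpace D]
    (φ : (ℕ → D) → ℝ) (hφ : Continuous φ)
    (M : Set (ProbabilityMeasure (ℕ → D)))
    (hM : M = {μ : ProbabilityMeasure (ℕ → D) |
      (μ : Measure (ℕ → D)).map (fun ω n => ω (n + 1)) = (μ : Measure (ℕ → D))})
    (Dly : ProbabilityMeasure (ℕ → D) → ℝ)
    (hD : UpperSemicontinuousOn Dly M)
    (hDaff : ∀ (μ ν κ : ProbabilityMeasure (ℕ → D)), μ ∈ M → ν ∈ M →
      ∀ ρ : ℝ≥0, ρ ≤ 1 →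
      (κ : Measure (ℕ → D))
        = (ρ : ℝ≥0∞) • (μ : Measure (ℕ → D)) + (1 - (ρ : ℝ≥0∞)) • (ν : Measure (ℕ → D)) →
      Dly κ = (ρ : ℝ) * Dly μ + (1 - (ρ : ℝ)) * Dly ν)
    (f : ℝ → ℝ)
    (hf : ∀ α : ℝ, f α = sSup (Dly ''
      {μ : ProbabilityMeasure (ℕ → D) | μ ∈ M ∧ ∫ ω, φ ω ∂(μ : Measure (ℕ → D)) = α}))
    (αmin αmax : ℝ)
    (hαmin : αmin = sInf ((fun μ : ProbabilityMeasure (ℕ → D) =>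
      ∫ ω, φ ω ∂(μ : Measure (ℕ → D))) '' M))
    (hαmax : αmax = sSup ((fun μ : ProbabilityMeasure (ℕ → D) =>
      ∫ ω, φ ω ∂(μ : Measure (ℕ → D))) '' M)) :
    LowerSemicontinuousOn f (Set.Icc αmin αmax) ∧
      ContinuousOn f (Set.Icc αmin αmax) := by
  set I := fun μ : ProbabilityMeasure (ℕ → D) => ∫ ω, φ ω ∂(μ : Measure (ℕ → D))
  obtain rfl : f = fiberSup M I Dly := funext hf
  let Φ : BoundedContinuousFunction (ℕ → D) ℝ := .mkOfCompact ⟨φ, hφ⟩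
  have hI : Continuous I := ProbabilityMeasure.continuous_integral_boundedContinuousFunction Φ
  have hshift : Continuous fun (ω : ℕ → D) (n : ℕ) => ω (n + 1) := by fun_prop
  have hMc : IsCompact M := hM ▸ (ProbabilityMeasure.isClosed_setOf_map_eq_self hshift).isCompact
  have hMne : M.Nonempty := by
    refine ⟨⟨Measure.dirac fun _ => Classical.arbitrary D, inferInstance⟩, hM ▸ ?_⟩
    exact Measure.map_dirac' hshift.measurable _
  have hmix : ∀ μ ∈ M, ∀ ν ∈ M, ∀ a b : ℝ, 0 ≤ a → 0 ≤ b → a + b = 1 →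
      ∃ κ ∈ M, I κ = a * I μ + b * I ν ∧ a * Dly μ + b * Dly ν ≤ Dly κ := by
    intro μ hμ ν hν a b ha hb hab
    obtain rfl : b = 1 - a := by linarith
    have hρ : (⟨a, ha⟩ : ℝ≥0) ≤ 1 := show a ≤ 1 by linarith
    refine ⟨ProbabilityMeasure.convexComb μ ν _ hρ, ?_,
      ProbabilityMeasure.integral_convexComb μ ν hρ (Φ.integrable _) (Φ.integrable _),
      (hDaff μ ν _ hμ hν _ hρ rfl).ge⟩
    rw [hM] at hμ hν ⊢
    exact (ProbabilityMeasure.map_convexComb μ ν hρ hshift.measurable).trans (by rw [hμ, hν]; rfl)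
  have hconc := concaveOn_fiberSup (hD.bddAbove_of_isCompact hMc) hmix
  have hIM : I '' M = Set.Icc αmin αmax := by
    rw [hαmin, hαmax]
    exact eq_Icc_of_connected_compact (hconc.1.isConnected (hMne.image I)) (hMc.image hI)
  have hlsc := (hIM ▸ hconc).lowerSemicontinuousOn_Icc
  have husc := hIM ▸ upperSemicontinuousOn_fiberSup hMc hI.continuousOn hD
  exact ⟨hlsc, continuousOn_iff_lower_upperSemicontinuousOn.2 ⟨hlsc, husc⟩⟩
end

section
/- Let $(\gamma_q)_{q\ge 0}$ be a sequence of natural numbers with $\gamma_0=0$ and, for $q>1$, $\gamma_q = q\,\gamma_{q-1}\,M_q+\gamma_{q-1}$ where $M_q\ge 1$ are natural numbers. Let $(x_n)$ be a bounded real sequence, $\alpha\in\mathbb{R}$, and suppose that whenever $\gamma_{q-1}\le m < n$ with $n-m\ge N(q)$ and the block $(x_m,\dots,x_{n-1})$ lies in block $q$'s range, $\left|\sum_{l=m}^{n-1}x_l-(n-m)\alpha\right| < \frac{n}{q}+E_n$ where $E_n/n\to 0$. If additionally $\gamma_{q-1}\le\gamma_q/q$ and $N(q+1)\le\gamma_q/q$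 for all $q$, then $\lim_{n\to\infty}\frac{1}{n}\sum_{l=0}^{n-1}x_l=\alpha$. -/
/-!
Let `q = q(n)` be the largest index with `γ q ≤ n` and split `[0, n)` into the prefix
`[0, γ (q-1))`, the completed block `[γ (q-1), γ q)` and the tail `[γ q, n)`. The prefix has
length at most `n / q`, the completed block is controlled by the block hypothesis, and the tail
is either long enough for the block hypothesis at level `q + 1` or shorter than
`N (q+1) ≤ n / q`. Hence `|∑_{l<n} x l - n α| ≤ O(n / q) + |E (γ q)| + |E n|`, and `q(n) → ∞`.
-/

open Filter Topology Finset

def deviation (x : ℕ → ℝ) (α : ℝ) (m n : ℕ) : ℝ :=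
  ∑ l ∈ Ico m n, x l - ((n : ℝ) - m) * α

/-- The paper's `q_n`; it is `0` when no `q ≤ n` has `γ q ≤ n`. -/
def blockIndex (γ : ℕ → ℕ) (n : ℕ) : ℕ :=
  Nat.findGreatest (fun q => γ q ≤ n) n

def BlockBound (γ N : ℕ → ℕ) (x : ℕ → ℝ) (α : ℝ) (E : ℕ → ℝ) : Prop :=
  ∀ q m n : ℕ, 1 ≤ q → γ (q - 1) ≤ m → m < n → n ≤ γ q → N q ≤ n - m →
    |deviation x α m n| < (n : ℝ) / q + E n

section Deviation

variable {x : ℕ → ℝ} {α C : ℝ}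

theorem deviation_add_deviation {m n k : ℕ} (hmn : m ≤ n) (hnk : n ≤ k) :
    deviation x α m n + deviation x α n k = deviation x α m k := by
  simp only [deviation, ← sum_Ico_consecutive x hmn hnk]
  ring

theorem abs_deviation_le (hC : ∀ n, |x n| ≤ C) {m n : ℕ} (hmn : m ≤ n) :
    |deviation x α m n| ≤ ((n : ℝ) - m) * (C + |α|) := by
  have hlen : ((n : ℝ) - m) = (#(Ico m n) : ℝ) := by
    rw [Nat.card_Ico, Nat.cast_sub hmn]
  rw [deviation, hlen, ← nsmul_eq_mul, ← sum_const, ← sum_sub_distrib, ← nsmul_eq_mul]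
  refine (abs_sum_le_sum_abs _ _).trans (sum_le_card_nsmul _ _ _ fun l _ => ?_)
  exact (abs_sub _ _).trans (by linarith [hC l])

theorem abs_deviation_le_of_mul_le (hC : ∀ n, |x n| ≤ C) {m n k q : ℕ} (hq : 0 < q)
    (hmn : m ≤ n) (h : q * (n - m) ≤ k) :
    |deviation x α m n| ≤ (C + |α|) * (k / q) := by
  have hK : 0 ≤ C + |α| := add_nonneg ((abs_nonneg _).trans (hC 0)) (abs_nonneg α)
  have hlen : (n : ℝ) - m ≤ k / q := by
    rw [le_div_iff₀ (by positivity), ← Nat.cast_sub hmn]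
    exact_mod_cast (mul_comm (n - m) q ▸ h)
  calc |deviation x α m n| ≤ ((n : ℝ) - m) * (C + |α|) := abs_deviation_le hC hmn
    _ ≤ (C + |α|) * (k / q) := by rw [mul_comm]; gcongr

end Deviation

section BlockIndex

variable {γ : ℕ → ℕ}

theorem self_le_of_mul_pred_le (hγ1 : γ 1 = 1)
    (hγdiv : ∀ q, 1 ≤ q → q * γ (q - 1) ≤ γ q) (q : ℕ) : q ≤ γ q := by
  induction q with
  | zero => exact Nat.zero_le _
  | succ p ih =>
    rcases p with _ | p
    · exact hγ1.ge
    · have : (p + 2) * γ (p + 1) ≤ γ (p + 2) := hγdiv (p + 2) (by omega)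
      nlinarith

theorem apply_blockIndex_le {n : ℕ} (h : blockIndex γ n ≠ 0) : γ (blockIndex γ n) ≤ n :=
  Nat.findGreatest_of_ne_zero (P := fun q => γ q ≤ n) rfl h

theorem lt_apply_blockIndex_succ (hγ : ∀ q, q ≤ γ q) (n : ℕ) :
    n < γ (blockIndex γ n + 1) := by
  by_contra! h
  exact Nat.findGreatest_is_greatest (Nat.lt_succ_self _) ((hγ _).trans h) h

theorem tendsto_blockIndex : Tendsto (blockIndex γ) atTop atTop :=
  tendsto_atTop_atTop.2 fun q =>
    ⟨max q (γ q), fun _ hn => Nat.le_findGreatest (le_of_max_le_left hn) (le_of_max_le_right hn)⟩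

end BlockIndex

section Estimate

variable {γ N : ℕ → ℕ} {x : ℕ → ℝ} {α C : ℝ} {E : ℕ → ℝ} {q n : ℕ}

theorem abs_deviation_block_le (hblock : BlockBound γ N x α E)
    (hγdiv : ∀ q, 1 ≤ q → q * γ (q - 1) ≤ γ q) (hN : ∀ q, 1 ≤ q → q * N (q + 1) ≤ γ q)
    (hq : 2 ≤ q) (ha : 1 ≤ γ (q - 1)) (hb : γ q ≤ n) :
    |deviation x α (γ (q - 1)) (γ q)| ≤ n / q + |E (γ q)| := by
  have hqa := hγdiv q (by omega)
  have hNq : (q - 1) * N q ≤ γ (q - 1) := by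
    simpa [Nat.sub_add_cancel (by omega : 1 ≤ q)] using hN (q - 1) (by omega)
  have hab : γ (q - 1) < γ q := by nlinarith
  have hlong : N q ≤ γ q - γ (q - 1) := by
    have : N q ≤ (q - 1) * N q := Nat.le_mul_of_pos_left _ (by omega)
    have : 2 * γ (q - 1) ≤ q * γ (q - 1) := Nat.mul_le_mul_right _ hq
    omega
  have hbn : (γ q : ℝ) / q ≤ n / q := by gcongr
  linarith [hblock q _ _ (by omega) le_rfl hab le_rfl hlong, le_abs_self (E (γ q))]

theorem abs_deviation_tail_le (hC : ∀ n, |x n| ≤ C) (hblock : BlockBound γ N x α E)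
    (hN : ∀ q, 1 ≤ q → q * N (q + 1) ≤ γ q) (hq : 1 ≤ q) (hb : γ q ≤ n)
    (hn : n < γ (q + 1)) :
    |deviation x α (γ q) n| ≤ (C + |α| + 1) * (n / q) + |E n| := by
  by_cases hlong : γ q < n ∧ N (q + 1) ≤ n - γ q
  · have hK : 0 ≤ (C + |α|) * (n / q) :=
      mul_nonneg (add_nonneg ((abs_nonneg _).trans (hC 0)) (abs_nonneg α)) (by positivity)
    have h := hblock (q + 1) (γ q) n (by omega) le_rfl hlong.1 hn.le hlong.2
    have hq' : (n : ℝ) / ↑(q + 1) ≤ n / q :=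
      div_le_div_of_nonneg_left (by positivity) (by exact_mod_cast hq) (by push_cast; linarith)
    linarith [le_abs_self (E n)]
  · have hshort : q * (n - γ q) ≤ n := by
      have := hN q hq
      have : q * (n - γ q) ≤ q * N (q + 1) := Nat.mul_le_mul_left _ (by omega)
      omega
    linarith [abs_deviation_le_of_mul_le (α := α) hC hq hb hshort, abs_nonneg (E n),
      (by positivity : (0 : ℝ) ≤ n / q)]

theorem abs_deviation_le_of_mem_block (hC : ∀ n, |x n| ≤ C) (hblock : BlockBound γ N x α E)
    (hγdiv : ∀ q, 1 ≤ q → q * γ (q - 1) ≤ γ q) (hN : ∀ q, 1 ≤ q → q * N (q + 1) ≤ γ q)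
    (hq : 2 ≤ q) (ha : 1 ≤ γ (q - 1)) (hb : γ q ≤ n) (hn : n < γ (q + 1)) :
    |deviation x α 0 n| ≤ (2 * (C + |α|) + 2) * (n / q) + |E (γ q)| + |E n| := by
  have hqa := hγdiv q (by omega)
  have hab : γ (q - 1) ≤ γ q := le_of_mul_le_mul_left (by nlinarith) (by omega : 0 < q)
  have hprefix : |deviation x α 0 (γ (q - 1))| ≤ (C + |α|) * (n / q) :=
    abs_deviation_le_of_mul_le hC (by omega) (Nat.zero_le _) (by simpa using hqa.trans hb)
  have hmiddle := abs_deviation_block_le hblock hγdiv hN hq ha hb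
  have htail := abs_deviation_tail_le hC hblock hN (by omega) hb hn
  rw [← deviation_add_deviation (Nat.zero_le _) hb,
    ← deviation_add_deviation (Nat.zero_le _) hab]
  linarith [abs_add_three (deviation x α 0 (γ (q - 1))) (deviation x α (γ (q - 1)) (γ q))
    (deviation x α (γ q) n)]

theorem abs_average_sub_le_of_mem_block (hC : ∀ n, |x n| ≤ C)
    (hblock : BlockBound γ N x α E) (hγdiv : ∀ q, 1 ≤ q → q * γ (q - 1) ≤ γ q)
    (hN : ∀ q, 1 ≤ q → q * N (q + 1) ≤ γ q) (hq : 2 ≤ q) (ha : 1 ≤ γ (q - 1))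
    (hb : γ q ≤ n) (hn : n < γ (q + 1)) :
    |(∑ l ∈ range n, x l) / n - α| ≤
      (2 * (C + |α|) + 2) / q + |E (γ q) / γ q| + |E n / n| := by
  have hb0 : (0 : ℝ) < γ q := by
    have := hγdiv q (by omega)
    exact_mod_cast (show 0 < γ q by nlinarith)
  have hn0 : (0 : ℝ) < n := hb0.trans_le (by exact_mod_cast hb)
  have havg : (∑ l ∈ range n, x l) / n - α = deviation x α 0 n / n := by
    rw [deviation, range_eq_Ico]
    field_simp
    ring
  have hEb : |E (γ q)| ≤ |E (γ q) / γ q| * n := by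
    rw [abs_div, Nat.abs_cast, div_mul_eq_mul_div, le_div_iff₀ hb0]
    gcongr
  have hEn : |E n| = |E n / n| * n := by
    rw [abs_div, Nat.abs_cast, div_mul_cancel₀ _ hn0.ne']
  have hA : (2 * (C + |α|) + 2) * (n / q) = (2 * (C + |α|) + 2) / q * n := by ring
  rw [havg, abs_div, Nat.abs_cast, div_le_iff₀ hn0]
  linarith [abs_deviation_le_of_mem_block hC hblock hγdiv hN hq ha hb hn]

end Estimate

theorem stmt_19_general (γ N : ℕ → ℕ)
    (hγ1 : γ 1 = 1)
    (x : ℕ → ℝ) (C : ℝ) (hC : ∀ n, |x n| ≤ C)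
    (α : ℝ) (E : ℕ → ℝ)
    (hE : Tendsto (fun n => E n / n) atTop (𝓝 0))
    (hblock : ∀ q m n : ℕ, 1 ≤ q → γ (q - 1) ≤ m → m < n → n ≤ γ q →
      N q ≤ n - m →
      |(∑ l ∈ Finset.Ico m n, x l) - ((n : ℝ) - m) * α| < (n : ℝ) / q + E n)
    (hγdiv : ∀ q, 1 ≤ q → q * γ (q - 1) ≤ γ q)
    (hN : ∀ q, 1 ≤ q → q * N (q + 1) ≤ γ q) :
    Tendsto (fun n : ℕ => (∑ l ∈ Finset.range n, x l) / n) atTop (𝓝 α) := by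
  have hγ : ∀ q, q ≤ γ q := self_le_of_mul_pred_le hγ1 hγdiv
  have hQ : Tendsto (blockIndex γ) atTop atTop := tendsto_blockIndex
  have hEabs : Tendsto (fun n => |E n / n|) atTop (𝓝 0) := by simpa using hE.abs
  have hbound : Tendsto (fun n => (2 * (C + |α|) + 2) / blockIndex γ n
      + |E (γ (blockIndex γ n)) / γ (blockIndex γ n)| + |E n / n|) atTop (𝓝 0) := by
    simpa using (((tendsto_const_div_atTop_nhds_zero_nat _).comp hQ).add
      ((hEabs.comp (tendsto_atTop_mono hγ tendsto_id)).comp hQ)).add hEabs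
  rw [tendsto_iff_norm_sub_tendsto_zero]
  refine squeeze_zero' (.of_forall fun _ => norm_nonneg _) ?_ hbound
  filter_upwards [hQ.eventually_ge_atTop 2] with n hn
  exact abs_average_sub_le_of_mem_block hC hblock hγdiv hN hn
    ((by omega : 1 ≤ blockIndex γ n - 1).trans (hγ _))
    (apply_blockIndex_le (by omega)) (lt_apply_blockIndex_succ hγ n)

/-- Abstract block-decomposition lemma (cf. Lemma 3.3 of the paper): let `γ 0 = 0`,
`γ 1 = 1` and `γ q = q * γ (q-1) * M q + γ (q-1)` for `q > 1` (with `M q ≥ 1`), let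
`(x n)` be a bounded real sequence, and suppose that for every `q ≥ 1` and every
`γ (q-1) ≤ m < n ≤ γ q` with `n - m ≥ N q` one has
`|∑_{l=m}^{n-1} x l - (n-m) α| < n/q + E n`, where `E n / n → 0`. If moreover
`q * γ (q-1) ≤ γ q` and `q * N (q+1) ≤ γ q` for all `q ≥ 1`, then the Birkhoff averages
`(1/n) ∑_{l<n} x l` converge to `α`. -/
theorem stmt_19 (γ N M : ℕ → ℕ)
    (hM : ∀ q, 1 ≤ M q)
    (hγ0 : γ 0 = 0) (hγ1 : γ 1 = 1)
    (hγrec : ∀ q, 1 < q → γ q = q * γ (q - 1) * M q + γ (q - 1))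
    (x : ℕ → ℝ) (C : ℝ) (hC : ∀ n, |x n| ≤ C)
    (α : ℝ) (E : ℕ → ℝ)
    (hE : Tendsto (fun n => E n / n) atTop (𝓝 0))
    (hblock : ∀ q m n : ℕ, 1 ≤ q → γ (q - 1) ≤ m → m < n → n ≤ γ q →
      N q ≤ n - m →
      |(∑ l ∈ Finset.Ico m n, x l) - ((n : ℝ) - m) * α| < (n : ℝ) / q + E n)
    (hγdiv : ∀ q, 1 ≤ q → q * γ (q - 1) ≤ γ q)
    (hN : ∀ q, 1 ≤ q → q * N (q + 1) ≤ γ q) :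
    Tendsto (fun n : ℕ => (∑ l ∈ Finset.range n, x l) / n) atTop (𝓝 α) :=
  stmt_19_general γ N hγ1 x C hC α E hE hblock hγdiv hN
end
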